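/- A De Morgan function lies in the clone ⟨DLat, −, ∂⟩ (equivalently ⟨∧, ∨, t, f, −, ∂⟩) if and only if it is harmonious. -/
import Mathlib


set_option autoImplicit false

/-- The four truth values of the Belnap–Dunn logic. -/
inductive DM4 : Type
  | t
  | f
  | n
  | b
deriving DecidableEq

namespace DM4

/-- De Morgan negation. -/
def neg : DM4 → DM4
  | t => f
  | f => t
  | n => n
  | b => b

/-- Conflation. -/
def conf : DM4 → DM4
  | t => t
  | f => f
  | n => b
  | b => n

/-- Meet in the truth order. -/
def meet : DM4 → DM4 → DM4
  | f, _ => f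
  | _, f => f
  | t, y => y
  | x, t => x
  | n, n => n
  | b, b => b
  | n, b => f
  | b, n => f

/-- Join in the truth order. -/
def join : DM4 → DM4 → DM4
  | t, _ => t
  | _, t => t
  | f, y => y
  | x, f => x
  | n, n => n
  | b, b => b
  | n, b => t
  | b, n => t

/-- Meet in the information order (⊗). -/
def imeet : DM4 → DM4 → DM4
  | n, _ => n
  | _, n => n
  | b, y => y
  | x, b => x
  | t, t => t
  | f, f => f
  | t, f => n
  | f, t => n

/-- Join in the information order (⊕). -/
def ijoin : DM4 → DM4 → DM4
  | b, _ => b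
  | _, b => b
  | n, y => y
  | x, n => x
  | t, t => t
  | f, f => f
  | t, f => b
  | f, t => b

/-- The truth order: least element `f`, greatest element `t`, with `n`, `b` incomparable. -/
def tle (x y : DM4) : Prop := x = y ∨ x = f ∨ y = t

/-- The information order: least element `n`, greatest element `b`, with `t`, `f` incomparable. -/
def ile (x y : DM4) : Prop := x = y ∨ x = n ∨ y = b

/-- □: maps t to t and everything else to f. -/
def box : DM4 → DM4
  | t => t
  | _ => f

/-- ◇: maps f to f and everything else to t. -/
def diamond : DM4 → DM4
  | f => f
  | _ => t

/-- Δ: maps t, b to t and n, f to f. -/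
def delta : DM4 → DM4
  | t => t
  | b => t
  | _ => f

/-- ∇: maps t, n to t and b, f to f. -/
def nabla : DM4 → DM4
  | t => t
  | n => t
  | _ => f

/-- id_{b↦n}: maps b to n and fixes t, f, n. -/
def idbn : DM4 → DM4
  | b => n
  | x => x

/-- id_{n↦b}: maps n to b and fixes t, f, b. -/
def idnb : DM4 → DM4
  | n => b
  | x => x

/-- id_{n↦t}: maps n to t and fixes t, f, b. -/
def idnt : DM4 → DM4
  | n => t
  | x => x

/-- id_{b↦t}: maps b to t and fixes t, f, n. -/
def idbt : DM4 → DM4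
  | b => t
  | x => x

/-- t_{n↦n}: maps n to n and everything else to t. -/
def tnn : DM4 → DM4
  | n => n
  | _ => t

/-- t_{b↦b}: maps b to b and everything else to t. -/
def tbb : DM4 → DM4
  | b => b
  | _ => t

/-- The binary function pbp²₁. -/
def pbp1 : DM4 → DM4 → DM4
  | t, t => t | t, f => f | t, n => f | t, b => b
  | f, t => t | f, f => f | f, n => f | f, b => b
  | n, t => t | n, f => f | n, n => n | n, b => b
  | b, t => b | b, f => f | b, n => f | b, b => b

/-- The binary function pbp²₂. -/
def pbp2 : DM4 → DM4 → DM4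
  | t, t => t | t, f => f | t, n => n | t, b => f
  | f, t => t | f, f => f | f, n => n | f, b => f
  | n, t => n | n, f => f | n, n => n | n, b => f
  | b, t => t | b, f => f | b, n => n | b, b => b

/-- The binary function mnh²₁. -/
def mnh1 : DM4 → DM4 → DM4
  | t, t => f | t, f => f | t, n => n | t, b => b
  | f, t => f | f, f => f | f, n => n | f, b => b
  | n, t => f | n, f => f | n, n => n | n, b => f
  | b, t => f | b, f => f | b, n => n | b, b => b

/-- The binary function mnh²₂. -/
def mnh2 : DM4 → DM4 → DM4
  | t, t => f | t, f => f | t, n => n | t, b => b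
  | f, t => f | f, f => f | f, n => n | f, b => b
  | n, t => f | n, f => f | n, n => n | n, b => b
  | b, t => f | b, f => f | b, n => f | b, b => b

/-- The binary function mhnp². -/
def mhnp2 : DM4 → DM4 → DM4
  | t, _ => t
  | f, _ => t
  | n, b => f
  | n, _ => n
  | b, n => f
  | b, _ => b

/-- The binary function mnp²₁. -/
def mnp1 : DM4 → DM4 → DM4
  | t, b => b
  | t, _ => t
  | f, b => b
  | f, _ => t
  | n, b => f
  | n, _ => n
  | b, n => f
  | b, _ => b

/-- The binary function mnp²₂. -/
def mnp2 : DM4 → DM4 → DM4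
  | t, _ => t
  | f, _ => t
  | n, _ => n
  | b, n => f
  | b, _ => b

/-- The binary function mnp²₃. -/
def mnp3 : DM4 → DM4 → DM4
  | t, n => n
  | t, _ => t
  | f, n => n
  | f, _ => t
  | n, b => f
  | n, _ => n
  | b, n => f
  | b, _ => b

/-- The binary function mnp²₄. -/
def mnp4 : DM4 → DM4 → DM4
  | t, _ => t
  | f, _ => t
  | n, b => f
  | n, _ => n
  | b, _ => b

/-- The ternary function mhnp³. -/
def mhnp3 : DM4 → DM4 → DM4 → DM4
  | _, t, _ => f
  | _, f, _ => f
  | t, n, _ => n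
  | f, n, _ => f
  | b, n, _ => f
  | n, n, b => f
  | n, n, _ => n
  | t, b, _ => b
  | f, b, _ => f
  | n, b, _ => f
  | b, b, n => f
  | b, b, _ => b

/-- The set of designated values. -/
def Des : Set DM4 := {t, b}

/-- Designatedness as a Boolean predicate. -/
def des : DM4 → Bool
  | t => true
  | b => true
  | _ => false

/-- The protoimplication →_{t-max}. -/
def tmax (x y : DM4) : DM4 :=
  match des x, des y with
  | true, false => n
  | _, _ => t

/-- The protoimplication →_{i-max}. -/
def imax (x y : DM4) : DM4 :=
  match des x, des y with
  | true, false => f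
  | _, _ => b

/-- The protoimplication ↔_{t-min}. -/
def tmin (x y : DM4) : DM4 := if x = y then b else f

/-- The protoimplication ↔_{i-min}. -/
def imin (x y : DM4) : DM4 := if x = y then t else n

/-- A binary operation is a protoimplication if it satisfies Reflexivity and Modus Ponens
with respect to the designated set {t, b}. -/
def IsProtoimplication (r : DM4 → DM4 → DM4) : Prop :=
  (∀ a : DM4, r a a ∈ Des) ∧ ∀ a c : DM4, a ∈ Des → r a c ∈ Des → c ∈ Des

/-- `DMFun k` is the type of De Morgan functions of arity `k + 1` (arities are positive). -/
abbrev DMFun (k : ℕ) : Type := (Fin (k + 1) → DM4) → DM4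

/-- Membership in the clone generated by the family of operations `S`
(`S k` is the set of generators of arity `k + 1`). -/
inductive InClone (S : ∀ k : ℕ, Set (DMFun k)) : ∀ k : ℕ, DMFun k → Prop
  | base {k : ℕ} {g : DMFun k} : g ∈ S k → InClone S k g
  | proj {k : ℕ} (i : Fin (k + 1)) : InClone S k (fun x => x i)
  | comp {k m : ℕ} {g : DMFun m} {h : Fin (m + 1) → DMFun k} :
      InClone S m g → (∀ i, InClone S k (h i)) →
      InClone S k (fun x => g (fun i => h i x))

/-- A family of sets of De Morgan functions is a clone if it contains all projections
and is closed under composition. -/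
structure IsClone (C : ∀ k : ℕ, Set (DMFun k)) : Prop where
  proj : ∀ (k : ℕ) (i : Fin (k + 1)), (fun x => x i) ∈ C k
  comp : ∀ (k m : ℕ) (g : DMFun m) (h : Fin (m + 1) → DMFun k),
      g ∈ C m → (∀ i, h i ∈ C k) → (fun x => g (fun i => h i x)) ∈ C k

/-- The generating family consisting of a single unary operation. -/
def op1 (g : DM4 → DM4) : ∀ k : ℕ, Set (DMFun k)
  | 0 => {fun x => g (x 0)}
  | _ + 1 => ∅

/-- The generating family consisting of a single binary operation. -/
def op2 (g : DM4 → DM4 → DM4) : ∀ k : ℕ, Set (DMFun k)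
  | 1 => {fun x => g (x 0) (x 1)}
  | _ => ∅

/-- The generating family consisting of a single ternary operation. -/
def op3 (g : DM4 → DM4 → DM4 → DM4) : ∀ k : ℕ, Set (DMFun k)
  | 2 => {fun x => g (x 0) (x 1) (x 2)}
  | _ => ∅

/-- Union of two families of operations. -/
def funion (S T : ∀ k : ℕ, Set (DMFun k)) : ∀ k : ℕ, Set (DMFun k) := fun k => S k ∪ T k

infixr:65 " ⊹ " => funion

/-- The generators of DLat: ∧, ∨, t, f (constants as unary constant functions). -/
def DLatGen : ∀ k : ℕ, Set (DMFun k) :=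
  op2 meet ⊹ op2 join ⊹ op1 (fun _ => t) ⊹ op1 (fun _ => f)

/-- The generators of DMA: ∧, ∨, t, f, −. -/
def DMAGen : ∀ k : ℕ, Set (DMFun k) := DLatGen ⊹ op1 neg

/-- The generators of BiLat: ∧, ∨, t, f, ⊗, ⊕, n, b. -/
def BiLatGen : ∀ k : ℕ, Set (DMFun k) :=
  DLatGen ⊹ op2 imeet ⊹ op2 ijoin ⊹ op1 (fun _ => n) ⊹ op1 (fun _ => b)

/-- A De Morgan function is harmonious if it commutes with conflation. -/
def Harmonious {k : ℕ} (g : DMFun k) : Prop :=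
  ∀ x : Fin (k + 1) → DM4, g (fun i => conf (x i)) = conf (g x)

/-- A De Morgan function is positive if it is monotone in the componentwise truth order. -/
def Positive {k : ℕ} (g : DMFun k) : Prop :=
  ∀ x y : Fin (k + 1) → DM4, (∀ i, tle (x i) (y i)) → tle (g x) (g y)

/-- A De Morgan function is persistent if it is monotone in the componentwise
information order. -/
def Persistent {k : ℕ} (g : DMFun k) : Prop :=
  ∀ x y : Fin (k + 1) → DM4, (∀ i, ile (x i) (y i)) → ile (g x) (g y)

/-- A De Morgan function preserves a subset X of DM4 if it maps tuples from X into X. -/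
def Preserves {k : ℕ} (g : DMFun k) (X : Set DM4) : Prop :=
  ∀ x : Fin (k + 1) → DM4, (∀ i, x i ∈ X) → g x ∈ X

def B2 : Set DM4 := {t, f}
def K3 : Set DM4 := {t, n, f}
def P3 : Set DM4 := {t, b, f}

/-- A unary operation as a De Morgan function. -/
def toF1 (g : DM4 → DM4) : DMFun 0 := fun x => g (x 0)

/-- A binary operation as a De Morgan function. -/
def toF2 (g : DM4 → DM4 → DM4) : DMFun 1 := fun x => g (x 0) (x 1)

/-- A ternary operation as a De Morgan function. -/
def toF3 (g : DM4 → DM4 → DM4 → DM4) : DMFun 2 := fun x => g (x 0) (x 1) (x 2)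

/-- The clone generated by a family of operations, as a family of sets. -/
def CloneOf (S : ∀ k : ℕ, Set (DMFun k)) : ∀ k : ℕ, Set (DMFun k) :=
  fun k => {g | InClone S k g}

/-- Inclusion of families of operations. -/
def CloneLE (C D : ∀ k : ℕ, Set (DMFun k)) : Prop := ∀ k : ℕ, C k ⊆ D k


/-! ### Auxiliary development for the harmonious clone characterization -/

instance : Fintype DM4 :=
  ⟨⟨[t, f, n, b], by decide⟩, fun x => by cases x <;> decide⟩

/-- First bit of the Bool×Bool encoding of DM4. -/
def pbit : DM4 → Bool
  | t => true
  | n => true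
  | f => false
  | b => false

/-- Second bit. -/
def qbit (x : DM4) : Bool := pbit (conf x)

/-- Encoding of a pair of bits as an element of DM4. -/
def enc : Bool → Bool → DM4
  | true, true => t
  | true, false => n
  | false, true => b
  | false, false => f

lemma enc_pq : ∀ y, enc (pbit y) (qbit y) = y := by decide
lemma meet_enc : ∀ a b c d, meet (enc a b) (enc c d) = enc (a && c) (b && d) := by decide
lemma join_enc : ∀ a b c d, join (enc a b) (enc c d) = enc (a || c) (b || d) := by decide
lemma negconf_enc : ∀ a b, neg (conf (enc a b)) = enc (!a) (!b) := by decide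
lemma conf_enc : ∀ a b, conf (enc a b) = enc b a := by decide
lemma conf_eq_enc : ∀ y, enc (qbit y) (pbit y) = conf y := by decide

/-- The generating family of the clone under study. -/
def HGen : ∀ k : ℕ, Set (DMFun k) := DLatGen ⊹ op1 neg ⊹ op1 conf

section CloneClosure

variable {k : ℕ}

lemma mem_hgen_meet : toF2 meet ∈ HGen 1 := Or.inl (Or.inl rfl)
lemma mem_hgen_join : toF2 join ∈ HGen 1 := Or.inl (Or.inr (Or.inl rfl))
lemma mem_hgen_t : toF1 (fun _ => t) ∈ HGen 0 := Or.inl (Or.inr (Or.inr (Or.inl rfl)))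
lemma mem_hgen_f : toF1 (fun _ => f) ∈ HGen 0 := Or.inl (Or.inr (Or.inr (Or.inr rfl)))
lemma mem_hgen_neg : toF1 neg ∈ HGen 0 := Or.inr (Or.inl rfl)
lemma mem_hgen_conf : toF1 conf ∈ HGen 0 := Or.inr (Or.inr rfl)

lemma cl_unary {op : DM4 → DM4} (hop : toF1 op ∈ HGen 0) {u : DMFun k}
    (hu : InClone HGen k u) : InClone HGen k (fun x => op (u x)) :=
  InClone.comp (g := toF1 op) (h := fun _ => u) (InClone.base hop) (fun _ => hu)

lemma cl_binary {op : DM4 → DM4 → DM4} (hop : toF2 op ∈ HGen 1) {u v : DMFun k}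
    (hu : InClone HGen k u) (hv : InClone HGen k v) :
    InClone HGen k (fun x => op (u x) (v x)) :=
  InClone.comp (g := toF2 op) (h := Fin.cons u (fun _ => v)) (InClone.base hop)
    (fun i => by
      refine Fin.cases ?_ ?_ i
      · exact hu
      · intro _; exact hv)

lemma cl_const_t : InClone HGen k (fun _ => t) :=
  InClone.comp (g := toF1 (fun _ => t)) (h := fun _ => fun x => x 0)
    (InClone.base mem_hgen_t) (fun _ => InClone.proj 0)

lemma cl_const_f : InClone HGen k (fun _ => f) :=
  InClone.comp (g := toF1 (fun _ => f)) (h := fun _ => fun x => x 0)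
    (InClone.base mem_hgen_f) (fun _ => InClone.proj 0)

end CloneClosure

/-- Boolean functions of the "double bits" of a k+1-tuple. -/
def BFn (k : ℕ) : Type := (Fin (k + 1) → Bool × Bool) → Bool

/-- `u` realizes the boolean function `φ` harmoniously. -/
def Realizes {k : ℕ} (u : DMFun k) (φ : BFn k) : Prop :=
  ∀ x : Fin (k + 1) → DM4,
    u x = enc (φ (fun i => (pbit (x i), qbit (x i)))) (φ (fun i => (qbit (x i), pbit (x i))))

/-- `φ` is realizable by a clone member. -/
def GoodBF {k : ℕ} (φ : BFn k) : Prop := ∃ u, InClone HGen k u ∧ Realizes u φ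

section GoodBF

variable {k : ℕ}

lemma good_congr {φ ψ : BFn k} (h : ∀ c, φ c = ψ c) (hφ : GoodBF φ) : GoodBF ψ := by
  obtain ⟨u, hu, hr⟩ := hφ
  exact ⟨u, hu, fun x => by rw [hr x, h, h]⟩

lemma good_var1 (i : Fin (k + 1)) : GoodBF (fun c => (c i).1) :=
  ⟨fun x => x i, InClone.proj i, fun x => (enc_pq (x i)).symm⟩

lemma good_var2 (i : Fin (k + 1)) : GoodBF (fun c => (c i).2) :=
  ⟨fun x => conf (x i), cl_unary mem_hgen_conf (InClone.proj i), fun x =>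
    (conf_eq_enc (x i)).symm⟩

lemma good_true : GoodBF (fun _ : Fin (k + 1) → Bool × Bool => true) :=
  ⟨fun _ => t, cl_const_t, fun _ => rfl⟩

lemma good_false : GoodBF (fun _ : Fin (k + 1) → Bool × Bool => false) :=
  ⟨fun _ => f, cl_const_f, fun _ => rfl⟩

lemma good_and {φ ψ : BFn k} (hφ : GoodBF φ) (hψ : GoodBF ψ) :
    GoodBF (fun c => φ c && ψ c) := by
  obtain ⟨u, hu, hru⟩ := hφ
  obtain ⟨v, hv, hrv⟩ := hψ
  refine ⟨fun x => meet (u x) (v x), cl_binary mem_hgen_meet hu hv, fun x => ?_⟩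
  show meet (u x) (v x) = _
  rw [hru x, hrv x, meet_enc]

lemma good_or {φ ψ : BFn k} (hφ : GoodBF φ) (hψ : GoodBF ψ) :
    GoodBF (fun c => φ c || ψ c) := by
  obtain ⟨u, hu, hru⟩ := hφ
  obtain ⟨v, hv, hrv⟩ := hψ
  refine ⟨fun x => join (u x) (v x), cl_binary mem_hgen_join hu hv, fun x => ?_⟩
  show join (u x) (v x) = _
  rw [hru x, hrv x, join_enc]

lemma good_not {φ : BFn k} (hφ : GoodBF φ) : GoodBF (fun c => !(φ c)) := by
  obtain ⟨u, hu, hru⟩ := hφ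
  refine ⟨fun x => neg (conf (u x)),
    cl_unary mem_hgen_neg (cl_unary mem_hgen_conf hu), fun x => ?_⟩
  show neg (conf (u x)) = _
  rw [hru x, negconf_enc]

lemma good_eqpair (i : Fin (k + 1)) (v : Bool × Bool) :
    GoodBF (fun c => decide (c i = v)) := by
  have key : ∀ (x w : Bool × Bool),
      ((if w.1 then x.1 else !x.1) && (if w.2 then x.2 else !x.2)) = decide (x = w) := by
    decide
  refine good_congr (fun c => key (c i) v) ?_
  refine good_and ?_ ?_
  · cases hv : v.1
    · exact good_not (good_var1 i)
    · exact good_var1 i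
  · cases hv : v.2
    · exact good_not (good_var2 i)
    · exact good_var2 i

lemma good_delta (a : Fin (k + 1) → Bool × Bool) : GoodBF (fun c => decide (c = a)) := by
  have main : ∀ S : Finset (Fin (k + 1)),
      GoodBF (fun c => decide (∀ i ∈ S, c i = a i)) := by
    intro S
    induction S using Finset.induction_on with
    | empty =>
      refine good_congr (fun c => ?_) good_true
      simp
    | @insert j S hj ih =>
      refine good_congr (fun c => ?_) (good_and (good_eqpair j (a j)) ih)
      simp [Finset.forall_mem_insert, Bool.decide_and]
  refine good_congr (fun c => ?_) (main Finset.univ)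
  simp [funext_iff]

lemma good_all (φ : BFn k) : GoodBF φ := by
  classical
  have main : ∀ T : Finset ((Fin (k + 1)) → Bool × Bool),
      GoodBF (fun c => decide (c ∈ T)) := by
    intro T
    induction T using Finset.induction_on with
    | empty =>
      refine good_congr (fun c => ?_) good_false
      simp
    | @insert a T ha ih =>
      refine good_congr (fun c => ?_) (good_or (good_delta a) ih)
      simp [Finset.mem_insert, Bool.decide_or]
  refine good_congr (fun c => ?_) (main (Finset.univ.filter (fun c => φ c = true)))
  simp [Finset.mem_filter]

end GoodBF

/-- Every generator is harmonious. -/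
lemma hgen_harmonious : ∀ {k : ℕ} (g : DMFun k), g ∈ HGen k → Harmonious g := by
  have hm : ∀ y z, meet (conf y) (conf z) = conf (meet y z) := by decide
  have hj : ∀ y z, join (conf y) (conf z) = conf (join y z) := by decide
  have hn : ∀ y, neg (conf y) = conf (neg y) := by decide
  have hc : ∀ a, conf (conf a) = conf (conf a) := fun _ => rfl
  intro k g hg
  match k with
  | 0 =>
    rcases hg with ((h | h | h | h) | h | h) <;> first
      | exact absurd h (Set.notMem_empty _)
      | · subst h
          intro x
          first
            | exact hn (x 0)
            | rfl
  | 1 =>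
    rcases hg with ((h | h | h | h) | h | h) <;> first
      | exact absurd h (Set.notMem_empty _)
      | · subst h
          intro x
          first
            | exact hm (x 0) (x 1)
            | exact hj (x 0) (x 1)
  | (k + 2) =>
    rcases hg with ((h | h | h | h) | h | h) <;> exact absurd h (Set.notMem_empty _)



/-- A De Morgan function lies in ⟨DLat, −, ∂⟩ = ⟨∧, ∨, t, f, −, ∂⟩
iff it is harmonious. -/
theorem harmonious_clone_characterization (k : ℕ) (g : DMFun k) :
    InClone (DLatGen ⊹ op1 neg ⊹ op1 conf) k g ↔ Harmonious g := by
  constructor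
  · intro h
    induction h with
    | base hg => exact hgen_harmonious _ hg
    | @proj k i => intro x; rfl
    | @comp k m gg hh hg hhyp ihg ihh =>
      intro x
      show gg (fun i => hh i (fun j => conf (x j))) = conf (gg (fun i => hh i x))
      have e1 : (fun i => hh i (fun j => conf (x j))) = fun i => conf (hh i x) :=
        funext fun i => ihh i x
      rw [e1]
      exact ihg (fun i => hh i x)
  · intro hg
    obtain ⟨u, hu, hr⟩ :=
      good_all (k := k) (fun c => pbit (g (fun i => enc (c i).1 (c i).2)))
    have key : ∀ x, u x = g x := by
      intro x
      rw [hr x]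
      show enc (pbit (g (fun i => enc (pbit (x i)) (qbit (x i)))))
            (pbit (g (fun i => enc (qbit (x i)) (pbit (x i))))) = g x
      have e1 : (fun i => enc (pbit (x i)) (qbit (x i))) = x :=
        funext fun i => enc_pq (x i)
      have e2 : (fun i => enc (qbit (x i)) (pbit (x i))) = fun i => conf (x i) :=
        funext fun i => conf_eq_enc (x i)
      rw [e1, e2, hg x]
      exact enc_pq (g x)
    have hug : u = g := funext key
    exact hug ▸ hu


end DM4
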